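/- Let Ω ⊆ ℝ² be open and let r : Ω → ℝ³ be a C³ immersion whose coordinates are isothermal, i.e. r_u·r_v ≡ 0 and |r_u| = |r_v| = λ on Ω for a positive function λ. Then the Gaussian curvature of r satisfies K = −(1/λ²) ( ∂²_{uu} ln λ + ∂²_{vv} ln λ ) at every point of Ω. -/

import Mathlib

noncomputable section

/-- Euclidean dot product on `ℝ³`. -/
def dot3 (x y : Fin 3 → ℝ) : ℝ := x 0 * y 0 + x 1 * y 1 + x 2 * y 2

/-- Cross product on `ℝ³`. -/
def cross3 (x y : Fin 3 → ℝ) : Fin 3 → ℝ :=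
  ![x 1 * y 2 - x 2 * y 1, x 2 * y 0 - x 0 * y 2, x 0 * y 1 - x 1 * y 0]

/-- Euclidean length on `ℝ³`. -/
def len3 (x : Fin 3 → ℝ) : ℝ := Real.sqrt (dot3 x x)

/-- Partial derivative in the first variable. -/
def du {E : Type*} [NormedAddCommGroup E] [NormedSpace ℝ E]
    (f : ℝ × ℝ → E) (p : ℝ × ℝ) : E := fderiv ℝ f p (1, 0)

/-- Partial derivative in the second variable. -/
def dv {E : Type*} [NormedAddCommGroup E] [NormedSpace ℝ E]
    (f : ℝ × ℝ → E) (p : ℝ × ℝ) : E := fderiv ℝ f p (0, 1)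

/-- First fundamental form coefficient `E = r_u · r_u`. -/
def Icoef₁ (r : ℝ × ℝ → Fin 3 → ℝ) (p : ℝ × ℝ) : ℝ := dot3 (du r p) (du r p)

/-- First fundamental form coefficient `F = r_u · r_v`. -/
def Icoef₂ (r : ℝ × ℝ → Fin 3 → ℝ) (p : ℝ × ℝ) : ℝ := dot3 (du r p) (dv r p)

/-- First fundamental form coefficient `G = r_v · r_v`. -/
def Icoef₃ (r : ℝ × ℝ → Fin 3 → ℝ) (p : ℝ × ℝ) : ℝ := dot3 (dv r p) (dv r p)

/-- Unit normal `n = (r_u × r_v)/|r_u × r_v|`. -/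
def unitNormal (r : ℝ × ℝ → Fin 3 → ℝ) (p : ℝ × ℝ) : Fin 3 → ℝ :=
  (len3 (cross3 (du r p) (dv r p)))⁻¹ • cross3 (du r p) (dv r p)

/-- Second fundamental form coefficient `L = r_uu · n`. -/
def IIcoef₁ (r : ℝ × ℝ → Fin 3 → ℝ) (p : ℝ × ℝ) : ℝ := dot3 (du (du r) p) (unitNormal r p)

/-- Second fundamental form coefficient `M = r_uv · n`. -/
def IIcoef₂ (r : ℝ × ℝ → Fin 3 → ℝ) (p : ℝ × ℝ) : ℝ := dot3 (dv (du r) p) (unitNormal r p)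

/-- Second fundamental form coefficient `N = r_vv · n`. -/
def IIcoef₃ (r : ℝ × ℝ → Fin 3 → ℝ) (p : ℝ × ℝ) : ℝ := dot3 (dv (dv r) p) (unitNormal r p)

/-- Gaussian curvature `K = (LN − M²)/(EG − F²)`. -/
def gaussK (r : ℝ × ℝ → Fin 3 → ℝ) (p : ℝ × ℝ) : ℝ :=
  (IIcoef₁ r p * IIcoef₃ r p - IIcoef₂ r p ^ 2) /
    (Icoef₁ r p * Icoef₃ r p - Icoef₂ r p ^ 2)

/-- Mean curvature `H = (EN − 2FM + GL)/(2(EG − F²))`. -/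
def meanH (r : ℝ × ℝ → Fin 3 → ℝ) (p : ℝ × ℝ) : ℝ :=
  (Icoef₁ r p * IIcoef₃ r p - 2 * Icoef₂ r p * IIcoef₂ r p + Icoef₃ r p * IIcoef₁ r p) /
    (2 * (Icoef₁ r p * Icoef₃ r p - Icoef₂ r p ^ 2))

/-!
In isothermal coordinates `E = G = λ²` and `F = 0`. Differentiating these three relations
expresses each product of a second derivative `r_uu, r_uv, r_vv` with `r_u` or `r_v` through
`E_u` and `E_v`; differentiating once more and using `r_uuv = r_uvu` gives the intrinsic identity
`r_uu · r_vv - r_uv · r_uv = -(E_uu + E_vv)/2`. The unit normal is `(r_u × r_v)/E`, so Lagrange's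
identity turns `LN - M²` into these products, and `K = (E_u² + E_v² - E (E_uu + E_vv)) / (2 E³)`.
This is `-Δ(log λ)/λ²` because `log λ = (log E)/2`.
-/

theorem dot3_comm (x y : Fin 3 → ℝ) : dot3 x y = dot3 y x := by
  unfold dot3; ring

theorem dot3_self_nonneg (x : Fin 3 → ℝ) : 0 ≤ dot3 x x := by
  unfold dot3; nlinarith [mul_self_nonneg (x 0), mul_self_nonneg (x 1), mul_self_nonneg (x 2)]

theorem dot3_smul_right (c : ℝ) (x y : Fin 3 → ℝ) : dot3 x (c • y) = c * dot3 x y := by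
  simp only [dot3, Pi.smul_apply, smul_eq_mul]; ring

theorem dot3_cross3_self (a b : Fin 3 → ℝ) :
    dot3 (cross3 a b) (cross3 a b) = dot3 a a * dot3 b b - dot3 a b ^ 2 := by
  simp only [dot3, cross3, Matrix.cons_val_zero, Matrix.cons_val_one, Matrix.cons_val_two,
    Matrix.head_cons, Matrix.tail_cons]
  ring

-- Polarised form of `(w · (a × b))² = det Gram(a, b, w)`.
theorem dot3_cross3_mul_dot3_cross3 (a b w z : Fin 3 → ℝ) :
    dot3 w (cross3 a b) * dot3 z (cross3 a b) =
      (dot3 a a * dot3 b b - dot3 a b ^ 2) * dot3 w z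
        - dot3 b b * (dot3 a w * dot3 a z) - dot3 a a * (dot3 b w * dot3 b z)
        + dot3 a b * (dot3 a w * dot3 b z + dot3 a z * dot3 b w) := by
  simp only [dot3, cross3, Matrix.cons_val_zero, Matrix.cons_val_one, Matrix.cons_val_two,
    Matrix.head_cons, Matrix.tail_cons]
  ring

section Calculus

variable {V E : Type*} [NormedAddCommGroup V] [NormedSpace ℝ V]
  [NormedAddCommGroup E] [NormedSpace ℝ E]

theorem fderiv_apply_congr_of_eqOn {f g : V → E} {Ω : Set V} (hΩ : IsOpen Ω)
    (h : Set.EqOn f g Ω) {p : V} (hp : p ∈ Ω) (w : V) : fderiv ℝ f p w = fderiv ℝ g p w := by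
  rw [(h.eventuallyEq_of_mem (hΩ.mem_nhds hp)).fderiv_eq]

theorem fderiv_const_mul_apply (c : ℝ) (g : V → ℝ) (p w : V) :
    fderiv ℝ (fun q => c * g q) p w = c * fderiv ℝ g p w := by
  rw [show (fun q => c * g q) = c • g from rfl, fderiv_const_smul_field]; rfl

theorem ContDiffOn.fderiv_apply_of_isOpen {f : V → E} {Ω : Set V} {m n : WithTop ℕ∞}
    (hf : ContDiffOn ℝ n f Ω) (hΩ : IsOpen Ω) (hmn : m + 1 ≤ n) (w : V) :
    ContDiffOn ℝ m (fun q => fderiv ℝ f q w) Ω :=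
  (hf.fderiv_of_isOpen hΩ hmn).clm_apply contDiffOn_const

theorem ContDiffOn.differentiableAt_fderiv_apply {f : V → E} {Ω : Set V} {n : WithTop ℕ∞}
    (hf : ContDiffOn ℝ n f Ω) (hΩ : IsOpen Ω) (hn : 2 ≤ n) {p : V} (hp : p ∈ Ω) (w : V) :
    DifferentiableAt ℝ (fun q => fderiv ℝ f q w) p :=
  ((hf.fderiv_apply_of_isOpen hΩ (m := 1) (one_add_one_eq_two.trans_le hn) w).differentiableOn
    one_ne_zero p hp).differentiableAt (hΩ.mem_nhds hp)

theorem ContDiffAt.fderiv_fderiv_apply_comm {f : V → E} {p : V} (hf : ContDiffAt ℝ 2 f p)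
    (v w : V) :
    fderiv ℝ (fun q => fderiv ℝ f q v) p w = fderiv ℝ (fun q => fderiv ℝ f q w) p v := by
  have hdf : DifferentiableAt ℝ (fderiv ℝ f) p :=
    (hf.fderiv_right (m := 1) le_rfl).differentiableAt one_ne_zero
  have hsecond (v w : V) :
      fderiv ℝ (fun q => fderiv ℝ f q v) p w = fderiv ℝ (fderiv ℝ f) p w v := by
    rw [fderiv_clm_apply hdf (differentiableAt_const v)]; simp
  rw [hsecond, hsecond]
  exact hf.isSymmSndFDerivAt (by simp [minSmoothness_of_isRCLikeNormedField]) w v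

theorem fderiv_dot3_apply {f g : V → Fin 3 → ℝ} {p : V} (hf : DifferentiableAt ℝ f p)
    (hg : DifferentiableAt ℝ g p) (w : V) :
    fderiv ℝ (fun q => dot3 (f q) (g q)) p w
      = dot3 (fderiv ℝ f p w) (g p) + dot3 (f p) (fderiv ℝ g p w) := by
  have hfi (i : Fin 3) : DifferentiableAt ℝ (fun q => f q i) p := differentiableAt_pi.1 hf i
  have hgi (i : Fin 3) : DifferentiableAt ℝ (fun q => g q i) p := differentiableAt_pi.1 hg i
  have hcoord {h : V → Fin 3 → ℝ} (hh : DifferentiableAt ℝ h p) (i : Fin 3) :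
      fderiv ℝ (fun q => h q i) p w = fderiv ℝ h p w i := by
    rw [fderiv_apply hh]; rfl
  unfold dot3
  rw [fderiv_fun_add (by fun_prop) (by fun_prop), fderiv_fun_add (by fun_prop) (by fun_prop),
    fderiv_fun_mul (hfi 0) (hgi 0), fderiv_fun_mul (hfi 1) (hgi 1),
    fderiv_fun_mul (hfi 2) (hgi 2)]
  simp only [add_apply, smul_apply, smul_eq_mul, hcoord hf, hcoord hg]
  ring

theorem fderiv_dot3_self_apply {f : V → Fin 3 → ℝ} {p : V} (hf : DifferentiableAt ℝ f p)
    (w : V) : fderiv ℝ (fun q => dot3 (f q) (f q)) p w = 2 * dot3 (f p) (fderiv ℝ f p w) := by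
  rw [fderiv_dot3_apply hf hf, dot3_comm (fderiv ℝ f p w)]; ring

theorem ContDiffOn.dot3 {f g : V → Fin 3 → ℝ} {Ω : Set V} {n : WithTop ℕ∞}
    (hf : ContDiffOn ℝ n f Ω) (hg : ContDiffOn ℝ n g Ω) :
    ContDiffOn ℝ n (fun q => dot3 (f q) (g q)) Ω := by
  have hfi (i : Fin 3) : ContDiffOn ℝ n (fun q => f q i) Ω := contDiffOn_pi.1 hf i
  have hgi (i : Fin 3) : ContDiffOn ℝ n (fun q => g q i) Ω := contDiffOn_pi.1 hg i
  exact (((hfi 0).mul (hgi 0)).add ((hfi 1).mul (hgi 1))).add ((hfi 2).mul (hgi 2))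

theorem fderiv_log_apply_of_sq_eq {φ lam : V → ℝ} {Ω : Set V} (hΩ : IsOpen Ω)
    (hlam : ∀ q ∈ Ω, 0 < lam q) (hsq : ∀ q ∈ Ω, lam q ^ 2 = φ q) {p : V} (hp : p ∈ Ω)
    (hφ : DifferentiableAt ℝ φ p) (w : V) :
    fderiv ℝ (fun q => Real.log (lam q)) p w = fderiv ℝ φ p w / (2 * φ p) := by
  have hlog : Set.EqOn (fun q => Real.log (lam q)) (fun q => 2⁻¹ * Real.log (φ q)) Ω := by
    intro q hq
    simp only [← hsq q hq, Real.log_pow]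
    ring
  have hφp : φ p ≠ 0 := by rw [← hsq p hp]; exact (pow_pos (hlam p hp) 2).ne'
  rw [fderiv_apply_congr_of_eqOn hΩ hlog hp, fderiv_const_mul_apply,
    (hφ.hasFDerivAt.log hφp).fderiv]
  simp only [smul_apply, smul_eq_mul]
  field_simp

theorem fderiv_fderiv_log_apply_of_sq_eq {φ lam : V → ℝ} {Ω : Set V} (hΩ : IsOpen Ω)
    (hφ : ContDiffOn ℝ 2 φ Ω) (hlam : ∀ q ∈ Ω, 0 < lam q) (hsq : ∀ q ∈ Ω, lam q ^ 2 = φ q)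
    {p : V} (hp : p ∈ Ω) (w : V) :
    fderiv ℝ (fun q => fderiv ℝ (fun q => Real.log (lam q)) q w) p w
      = (fderiv ℝ (fun q => fderiv ℝ φ q w) p w * φ p - fderiv ℝ φ p w ^ 2) / (2 * φ p ^ 2) := by
  have hφd : ∀ q ∈ Ω, DifferentiableAt ℝ φ q := fun q hq =>
    (hφ.differentiableOn two_ne_zero q hq).differentiableAt (hΩ.mem_nhds hq)
  have hφp : φ p ≠ 0 := by rw [← hsq p hp]; exact (pow_pos (hlam p hp) 2).ne'
  have hfirst : Set.EqOn (fun q => fderiv ℝ (fun q => Real.log (lam q)) q w)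
      (fun q => fderiv ℝ φ q w * (2 * φ q)⁻¹) Ω := fun q hq => by
    dsimp only
    rw [fderiv_log_apply_of_sq_eq hΩ hlam hsq hq (hφd q hq), div_eq_mul_inv]
  have hinv : HasFDerivAt (fun q => (2 * φ q)⁻¹) _ p :=
    (hasFDerivAt_inv (by positivity : 2 * φ p ≠ 0)).comp p ((hφd p hp).hasFDerivAt.const_mul 2)
  rw [fderiv_apply_congr_of_eqOn hΩ hfirst hp,
    ((hφ.differentiableAt_fderiv_apply hΩ le_rfl hp w).hasFDerivAt.fun_mul hinv).fderiv]
  simp only [ContinuousLinearMap.comp_smulₛₗ, Real.ringHom_apply, add_apply, smul_apply,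
    ContinuousLinearMap.comp_apply, ContinuousLinearMap.toSpanSingleton_apply, smul_eq_mul]
  field_simp
  ring

end Calculus

section Isothermal

variable {Ω : Set (ℝ × ℝ)} {r : ℝ × ℝ → Fin 3 → ℝ}

theorem du_dv_comm {E : Type*} [NormedAddCommGroup E] [NormedSpace ℝ E] (hΩ : IsOpen Ω)
    {f : ℝ × ℝ → E} (hf : ContDiffOn ℝ 2 f Ω) {p : ℝ × ℝ} (hp : p ∈ Ω) :
    du (dv f) p = dv (du f) p :=
  (hf.contDiffAt (hΩ.mem_nhds hp)).fderiv_fderiv_apply_comm (0, 1) (1, 0)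

theorem dot3_secondDerivs_of_isothermal (hΩ : IsOpen Ω) (hr : ContDiffOn ℝ 2 r Ω)
    (horth : ∀ q ∈ Ω, Icoef₂ r q = 0) (hEG : ∀ q ∈ Ω, Icoef₃ r q = Icoef₁ r q)
    {q : ℝ × ℝ} (hq : q ∈ Ω) :
    dot3 (du r q) (du (du r) q) = 2⁻¹ * du (Icoef₁ r) q ∧
      dot3 (du r q) (dv (du r) q) = 2⁻¹ * dv (Icoef₁ r) q ∧
      dot3 (du r q) (dv (dv r) q) = -2⁻¹ * du (Icoef₁ r) q ∧
      dot3 (dv r q) (du (du r) q) = -2⁻¹ * dv (Icoef₁ r) q ∧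
      dot3 (dv r q) (dv (du r) q) = 2⁻¹ * du (Icoef₁ r) q ∧
      dot3 (dv r q) (dv (dv r) q) = 2⁻¹ * dv (Icoef₁ r) q := by
  have hru : DifferentiableAt ℝ (du r) q := hr.differentiableAt_fderiv_apply hΩ le_rfl hq (1, 0)
  have hrv : DifferentiableAt ℝ (dv r) q := hr.differentiableAt_fderiv_apply hΩ le_rfl hq (0, 1)
  have hEu : du (Icoef₁ r) q = 2 * dot3 (du r q) (du (du r) q) := fderiv_dot3_self_apply hru _
  have hEv : dv (Icoef₁ r) q = 2 * dot3 (du r q) (dv (du r) q) := fderiv_dot3_self_apply hru _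
  have hGu : du (Icoef₃ r) q = 2 * dot3 (dv r q) (du (dv r) q) := fderiv_dot3_self_apply hrv _
  have hGv : dv (Icoef₃ r) q = 2 * dot3 (dv r q) (dv (dv r) q) := fderiv_dot3_self_apply hrv _
  have hFu : du (Icoef₂ r) q = dot3 (du (du r) q) (dv r q) + dot3 (du r q) (du (dv r) q) :=
    fderiv_dot3_apply hru hrv _
  have hFv : dv (Icoef₂ r) q = dot3 (dv (du r) q) (dv r q) + dot3 (du r q) (dv (dv r) q) :=
    fderiv_dot3_apply hru hrv _
  have hF'u : du (Icoef₂ r) q = 0 := by rw [du, fderiv_apply_congr_of_eqOn hΩ horth hq]; simp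
  have hF'v : dv (Icoef₂ r) q = 0 := by rw [dv, fderiv_apply_congr_of_eqOn hΩ horth hq]; simp
  have hG'u : du (Icoef₃ r) q = du (Icoef₁ r) q := fderiv_apply_congr_of_eqOn hΩ hEG hq _
  have hG'v : dv (Icoef₃ r) q = dv (Icoef₁ r) q := fderiv_apply_congr_of_eqOn hΩ hEG hq _
  rw [du_dv_comm hΩ hr hq] at hFu hGu
  rw [dot3_comm (du (du r) q)] at hFu
  rw [dot3_comm (dv (du r) q)] at hFv
  refine ⟨?_, ?_, ?_, ?_, ?_, ?_⟩ <;> linarith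

theorem dot3_duu_dvv_sub_dot3_duv_duv_of_isothermal (hΩ : IsOpen Ω)
    (hr : ContDiffOn ℝ 3 r Ω) (horth : ∀ q ∈ Ω, Icoef₂ r q = 0)
    (hEG : ∀ q ∈ Ω, Icoef₃ r q = Icoef₁ r q) {p : ℝ × ℝ} (hp : p ∈ Ω) :
    dot3 (du (du r) p) (dv (dv r) p) - dot3 (dv (du r) p) (dv (du r) p)
      = -2⁻¹ * (du (du (Icoef₁ r)) p + dv (dv (Icoef₁ r)) p) := by
  have hr2 : ContDiffOn ℝ 2 r Ω := hr.of_le (by norm_num)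
  have hru2 : ContDiffOn ℝ 2 (du r) Ω := hr.fderiv_apply_of_isOpen hΩ (by norm_num) (1, 0)
  have hrv : DifferentiableAt ℝ (dv r) p := hr2.differentiableAt_fderiv_apply hΩ le_rfl hp (0, 1)
  have hruu : DifferentiableAt ℝ (du (du r)) p :=
    hru2.differentiableAt_fderiv_apply hΩ le_rfl hp (1, 0)
  have hruv : DifferentiableAt ℝ (dv (du r)) p :=
    hru2.differentiableAt_fderiv_apply hΩ le_rfl hp (0, 1)
  have hbx : ∀ q ∈ Ω, dot3 (dv r q) (du (du r) q) = -2⁻¹ * dv (Icoef₁ r) q := fun q hq =>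
    (dot3_secondDerivs_of_isothermal hΩ hr2 horth hEG hq).2.2.2.1
  have hby : ∀ q ∈ Ω, dot3 (dv r q) (dv (du r) q) = 2⁻¹ * du (Icoef₁ r) q := fun q hq =>
    (dot3_secondDerivs_of_isothermal hΩ hr2 horth hEG hq).2.2.2.2.1
  have hbx_v : dot3 (dv (dv r) p) (du (du r) p) + dot3 (dv r p) (dv (du (du r)) p)
      = -2⁻¹ * dv (dv (Icoef₁ r)) p :=
    (fderiv_dot3_apply hrv hruu _).symm.trans
      ((fderiv_apply_congr_of_eqOn hΩ hbx hp _).trans (fderiv_const_mul_apply _ _ _ _))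
  have hby_u : dot3 (du (dv r) p) (dv (du r) p) + dot3 (dv r p) (du (dv (du r)) p)
      = 2⁻¹ * du (du (Icoef₁ r)) p :=
    (fderiv_dot3_apply hrv hruv _).symm.trans
      ((fderiv_apply_congr_of_eqOn hΩ hby hp _).trans (fderiv_const_mul_apply _ _ _ _))
  rw [du_dv_comm hΩ hr2 hp, du_dv_comm hΩ hru2 hp] at hby_u
  rw [dot3_comm (dv (dv r) p)] at hbx_v
  linarith

theorem gaussK_eq_of_isothermal_at {p : ℝ × ℝ} (horth : Icoef₂ r p = 0)
    (hEG : Icoef₃ r p = Icoef₁ r p) (hE : 0 < Icoef₁ r p) :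
    gaussK r p
      = (dot3 (du (du r) p) (dv (dv r) p) - dot3 (dv (du r) p) (dv (du r) p)) / Icoef₁ r p ^ 2
        - (dot3 (du r p) (du (du r) p) * dot3 (du r p) (dv (dv r) p)
            + dot3 (dv r p) (du (du r) p) * dot3 (dv r p) (dv (dv r) p)
            - dot3 (du r p) (dv (du r) p) ^ 2 - dot3 (dv r p) (dv (du r) p) ^ 2)
          / Icoef₁ r p ^ 3 := by
  set c := cross3 (du r p) (dv r p)
  have hlen : len3 c = Icoef₁ r p := by
    change Real.sqrt (dot3 c c) = _
    rw [dot3_cross3_self]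
    change Real.sqrt (Icoef₁ r p * Icoef₃ r p - Icoef₂ r p ^ 2) = _
    rw [horth, hEG, zero_pow two_ne_zero, sub_zero, Real.sqrt_mul_self hE.le]
  have hII (x : Fin 3 → ℝ) : dot3 x (unitNormal r p) = (Icoef₁ r p)⁻¹ * dot3 x c := by
    rw [unitNormal, hlen, dot3_smul_right]
  have hxz := dot3_cross3_mul_dot3_cross3 (du r p) (dv r p) (du (du r) p) (dv (dv r) p)
  have hyy := dot3_cross3_mul_dot3_cross3 (du r p) (dv r p) (dv (du r) p) (dv (du r) p)
  change _ = (Icoef₁ r p * Icoef₃ r p - Icoef₂ r p ^ 2) * _ - Icoef₃ r p * _ - Icoef₁ r p * _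
    + Icoef₂ r p * _ at hxz hyy
  rw [horth, hEG] at hxz hyy
  rw [gaussK, IIcoef₁, IIcoef₂, IIcoef₃, hII, hII, hII, horth, hEG]
  field_simp
  linear_combination Icoef₁ r p * hxz - Icoef₁ r p * hyy

theorem gaussK_eq_of_isothermal (hΩ : IsOpen Ω) (hr : ContDiffOn ℝ 3 r Ω)
    (horth : ∀ q ∈ Ω, Icoef₂ r q = 0) (hEG : ∀ q ∈ Ω, Icoef₃ r q = Icoef₁ r q)
    {p : ℝ × ℝ} (hp : p ∈ Ω) (hE : 0 < Icoef₁ r p) :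
    gaussK r p
      = (du (Icoef₁ r) p ^ 2 + dv (Icoef₁ r) p ^ 2
          - Icoef₁ r p * (du (du (Icoef₁ r)) p + dv (dv (Icoef₁ r)) p)) / (2 * Icoef₁ r p ^ 3) := by
  obtain ⟨hax, hay, haz, hbx, hby, hbz⟩ :=
    dot3_secondDerivs_of_isothermal hΩ (hr.of_le (by norm_num)) horth hEG hp
  rw [gaussK_eq_of_isothermal_at (horth p hp) (hEG p hp) hE,
    dot3_duu_dvv_sub_dot3_duv_duv_of_isothermal hΩ hr horth hEG hp,
    hax, hay, haz, hbx, hby, hbz]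
  field_simp
  ring

end Isothermal

theorem isothermal_curvature_formula_general
    (Ω : Set (ℝ × ℝ)) (hΩ : IsOpen Ω)
    (r : ℝ × ℝ → Fin 3 → ℝ)
    (hr : ContDiffOn ℝ 3 r Ω)
    (lam : ℝ × ℝ → ℝ)
    (hpos : ∀ p ∈ Ω, 0 < lam p)
    (horth : ∀ p ∈ Ω, dot3 (du r p) (dv r p) = 0)
    (hiso₁ : ∀ p ∈ Ω, len3 (du r p) = lam p)
    (hiso₂ : ∀ p ∈ Ω, len3 (dv r p) = lam p) :
    ∀ p ∈ Ω,
      gaussK r p =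
        -(1 / (lam p) ^ 2) *
          (du (du (fun q => Real.log (lam q))) p +
           dv (dv (fun q => Real.log (lam q))) p) := by
  intro p hp
  have hlen_sq {x : Fin 3 → ℝ} {l : ℝ} (h : len3 x = l) : l ^ 2 = dot3 x x := by
    rw [← h, len3, Real.sq_sqrt (dot3_self_nonneg x)]
  have hsq (q : ℝ × ℝ) (hq : q ∈ Ω) : lam q ^ 2 = Icoef₁ r q := hlen_sq (hiso₁ q hq)
  have hEG (q : ℝ × ℝ) (hq : q ∈ Ω) : Icoef₃ r q = Icoef₁ r q := by
    rw [← hsq q hq, hlen_sq (hiso₂ q hq)]; rfl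
  have hE : ContDiffOn ℝ 2 (Icoef₁ r) Ω := by
    have hru := hr.fderiv_apply_of_isOpen (m := 2) hΩ (by norm_num) (1, 0)
    exact hru.dot3 hru
  have hlog_uu : du (du (fun q => Real.log (lam q))) p
      = (du (du (Icoef₁ r)) p * Icoef₁ r p - du (Icoef₁ r) p ^ 2) / (2 * Icoef₁ r p ^ 2) :=
    fderiv_fderiv_log_apply_of_sq_eq hΩ hE hpos hsq hp _
  have hlog_vv : dv (dv (fun q => Real.log (lam q))) p
      = (dv (dv (Icoef₁ r)) p * Icoef₁ r p - dv (Icoef₁ r) p ^ 2) / (2 * Icoef₁ r p ^ 2) :=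
    fderiv_fderiv_log_apply_of_sq_eq hΩ hE hpos hsq hp _
  have hE_pos : 0 < Icoef₁ r p := hsq p hp ▸ pow_pos (hpos p hp) 2
  rw [gaussK_eq_of_isothermal hΩ hr horth hEG hp hE_pos, hlog_uu, hlog_vv, hsq p hp]
  field_simp
  ring

/-- **Gaussian curvature in isothermal coordinates**: for a `C³` immersion with
isothermal coordinates (`r_u · r_v ≡ 0` and `|r_u| = |r_v| = λ > 0`),
`K = −(1/λ²)(∂²_{uu} ln λ + ∂²_{vv} ln λ)`. -/
theorem isothermal_curvature_formula
    (Ω : Set (ℝ × ℝ)) (hΩ : IsOpen Ω)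
    (r : ℝ × ℝ → Fin 3 → ℝ)
    (hr : ContDiffOn ℝ 3 r Ω)
    (himm : ∀ p ∈ Ω, cross3 (du r p) (dv r p) ≠ 0)
    (lam : ℝ × ℝ → ℝ)
    (hpos : ∀ p ∈ Ω, 0 < lam p)
    (horth : ∀ p ∈ Ω, dot3 (du r p) (dv r p) = 0)
    (hiso₁ : ∀ p ∈ Ω, len3 (du r p) = lam p)
    (hiso₂ : ∀ p ∈ Ω, len3 (dv r p) = lam p) :
    ∀ p ∈ Ω,
      gaussK r p =
        -(1 / (lam p) ^ 2) *
          (du (du (fun q => Real.log (lam q))) p +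
           dv (dv (fun q => Real.log (lam q))) p) :=
  isothermal_curvature_formula_general Ω hΩ r hr lam hpos horth hiso₁ hiso₂
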